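/- arXiv:2309.03423 — 5 statements merged into one kernel-verified Lean document; each statement's English description precedes it below -/
import Mathlib

section
/- Fix d ≥ 1, ω, θ ∈ ℝ (mod 1), complex numbers v₁,…,v_d with v_{−k} := conj(v_k), and a function g : 𝕋 → ℝ satisfying g(−θ) = g(θ). Let V(θ) ∈ Mat(d,ℂ) have entries V_{jk} = g(θ+(d−j)d^{-1}ω) if j = k, v_{k−j} if k > j, conj(v_{j−k}) if j > k, and let B ∈ Mat(d,ℂ) be upper triangular with B_{jk} = conj(v_{d−(k−j)}) for k ≥ j, 0 otherwise. Let J ∈ Mat(d,ℂ) be the anti-diagonal permutation matrix (J_{jk} = 1 iff j+k = d+1). Then J V(θ − (d−1)/(2d)·ω) J^{-1} = V(−θ − (d−1)/(2d)·ω)^T and J B J^{-1} = B^T. -/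
noncomputable section

open Matrix

/-- The block potential matrix `V(θ)` of the long-range operator: diagonal entries
`g(θ+(d−j)d⁻¹ω)` (1-based `j`), entries `v_{k−j}` above the diagonal and `conj(v_{j−k})`
below it. -/
def Vlr (d : ℕ) (v : ℕ → ℂ) (g : ℝ → ℝ) (ω θ : ℝ) : Matrix (Fin d) (Fin d) ℂ := fun j k =>
  if j = k then (g (θ + ((d - 1 - (j : ℕ) : ℕ) : ℝ) * (ω / d)) : ℂ)
  else if (j : ℕ) < (k : ℕ) then v ((k : ℕ) - (j : ℕ))
  else starRingEnd ℂ (v ((j : ℕ) - (k : ℕ)))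

/-- The hopping matrix `B`: upper triangular with `B_{jk} = conj(v_{d−(k−j)})` for `k ≥ j`. -/
def Blr (d : ℕ) (v : ℕ → ℂ) : Matrix (Fin d) (Fin d) ℂ := fun j k =>
  if (j : ℕ) ≤ (k : ℕ) then starRingEnd ℂ (v (d - ((k : ℕ) - (j : ℕ)))) else 0

/-- The anti-diagonal permutation matrix `J` (`J_{jk} = 1` iff `j+k = d+1`, 1-based). -/
def Jmat (d : ℕ) : Matrix (Fin d) (Fin d) ℂ := fun j k =>
  if (j : ℕ) + (k : ℕ) = d - 1 then 1 else 0

lemma Jmat_mul {d : ℕ} (M : Matrix (Fin d) (Fin d) ℂ) (j k : Fin d) :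
    (Jmat d * M) j k = M j.rev k := by
  rw [Matrix.mul_apply, Finset.sum_eq_single j.rev]
  · have hj := j.isLt
    simp only [Jmat, Fin.val_rev]
    rw [if_pos (by omega)]; simp
  · intro i _ hi
    have hj := j.isLt
    have : ¬ ((j : ℕ) + (i : ℕ) = d - 1) := by
      intro h; apply hi; apply Fin.ext; simp [Fin.val_rev]; omega
    simp [Jmat, this]
  · simp

lemma mul_Jmat {d : ℕ} (M : Matrix (Fin d) (Fin d) ℂ) (j k : Fin d) :
    (M * Jmat d) j k = M j k.rev := by
  rw [Matrix.mul_apply, Finset.sum_eq_single k.rev]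
  · have hk := k.isLt
    simp only [Jmat, Fin.val_rev]
    rw [if_pos (by omega)]; simp
  · intro i _ hi
    have hk := k.isLt
    have : ¬ ((i : ℕ) + (k : ℕ) = d - 1) := by
      intro h; apply hi; apply Fin.ext; simp [Fin.val_rev]; omega
    simp [Jmat, this]
  · simp

lemma Jmat_inv (d : ℕ) : (Jmat d)⁻¹ = Jmat d := by
  apply inv_eq_right_inv
  ext j k
  rw [Jmat_mul]
  have hj := j.isLt
  have hk := k.isLt
  simp only [Jmat, Matrix.one_apply, Fin.val_rev]
  by_cases h : j = k
  · subst h; rw [if_pos rfl, if_pos (by omega)]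
  · rw [if_neg h, if_neg (by intro hc; apply h; apply Fin.ext; omega)]

/-- For even `g`: `J V(θ − (d−1)/(2d)·ω) J⁻¹ = V(−θ − (d−1)/(2d)·ω)ᵀ` and `J B J⁻¹ = Bᵀ`. -/
theorem conj_Vlr_Blr_by_J (d : ℕ) (hd : 1 ≤ d) (v : ℕ → ℂ) (g : ℝ → ℝ)
    (hg : ∀ x : ℝ, g (-x) = g x) (ω θ : ℝ) :
    Jmat d * Vlr d v g ω (θ - ((d : ℝ) - 1) / (2 * d) * ω) * (Jmat d)⁻¹
        = (Vlr d v g ω (-θ - ((d : ℝ) - 1) / (2 * d) * ω))ᵀ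
      ∧ Jmat d * Blr d v * (Jmat d)⁻¹ = (Blr d v)ᵀ := by
  have hd0 : (d : ℝ) ≠ 0 := by positivity
  constructor
  · ext j k
    rw [Jmat_inv, mul_Jmat, Jmat_mul, Matrix.transpose_apply]
    have hj := j.isLt
    have hk := k.isLt
    have hrj : (j.rev : ℕ) = d - 1 - (j : ℕ) := by simp [Fin.val_rev]; omega
    have hrk : (k.rev : ℕ) = d - 1 - (k : ℕ) := by simp [Fin.val_rev]; omega
    simp only [Vlr]
    by_cases h : j = k
    · subst h
      rw [if_pos rfl, if_pos rfl]
      have e1 : (d - 1 - (j.rev : ℕ) : ℕ) = (j : ℕ) := by omega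
      have e2 : ((d - 1 - (j : ℕ) : ℕ) : ℝ) = (d : ℝ) - 1 - (j : ℕ) := by
        push_cast [Nat.cast_sub (by omega : (j:ℕ) ≤ d - 1), Nat.cast_sub hd]; ring
      rw [e1]
      rw [show -θ - ((d : ℝ) - 1) / (2 * d) * ω + ((d - 1 - (j : ℕ) : ℕ) : ℝ) * (ω / d)
          = -(θ - ((d : ℝ) - 1) / (2 * d) * ω + ((j : ℕ) : ℝ) * (ω / d)) by
        rw [e2]; field_simp; ring]
      rw [hg]
    · have h1 : j.rev ≠ k.rev := fun hc => h (Fin.rev_injective hc)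
      have h2 : k ≠ j := fun hc => h hc.symm
      rw [if_neg h1, if_neg h2]
      rcases lt_or_gt_of_ne (fun hc : (j:ℕ) = (k:ℕ) => h (Fin.ext hc)) with hlt | hlt
      · rw [if_neg (by omega), if_neg (by omega)]
        congr 2; omega
      · rw [if_pos (by omega), if_pos (by omega)]
        congr 1; omega
  · ext j k
    rw [Jmat_inv, mul_Jmat, Jmat_mul, Matrix.transpose_apply]
    have hj := j.isLt
    have hk := k.isLt
    have hrj : (j.rev : ℕ) = d - 1 - (j : ℕ) := by simp [Fin.val_rev]; omega
    have hrk : (k.rev : ℕ) = d - 1 - (k : ℕ) := by simp [Fin.val_rev]; omega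
    simp only [Blr]
    by_cases h : (k : ℕ) ≤ (j : ℕ)
    · rw [if_pos (by omega), if_pos h]
      congr 2; omega
    · rw [if_neg (by omega), if_neg h]
end
end

section
/- Fix d ≥ 1, n ≥ 1, ω ∈ 𝕋, E ∈ ℝ, complex numbers v₁,…,v_d with v_{−k} := conj(v_k), and a function g : 𝕋 → ℝ satisfying g(−θ) = g(θ). Let V(θ), B be the block matrices of the long-range operator (V_{jk}(θ) = g(θ+(d−j)d^{-1}ω) if j = k, v_{k−j} if k > j, conj(v_{j−k}) if j > k; B upper triangular with B_{jk} = conj(v_{d−(k−j)}) for k ≥ j, else 0), and let f_{E,n} be the periodic-boundary determinant built from V, B with frequency ω. Then for every θ ∈ 𝕋: f_{E,n}(θ − (nd−1)/(2d)·ω) = conj( f_{E,n}(−θ − (nd−1)/(2d)·ω) ). -/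
/-!
`P_n(θ)` is Hermitian, so `f_{E,n}` is real. Reversing both the order of the blocks and the
indices inside each block carries `P_n(x)` to the transpose of `P_n(y)` whenever
`x + y + (n - 1)ω = -(d - 1)ω/d`: the hopping block `B` is persymmetric, and since `g` is even,
the reversal of `V(a)` is `V(b)ᵀ` for `a + b = -(d - 1)ω/d`. Hence `f_{E,n}(x) = f_{E,n}(y)`, and
the two arguments in the theorem are such a pair.
-/

noncomputable section

open Matrix

/-- Finite-volume block matrix `P_n(θ)` with periodic boundary conditions (constant hopping
block `B`): diagonal blocks `V(θ+(n−j)ω)` (1-based `j`), subdiagonal blocks `B`,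
superdiagonal blocks `B*`, corner blocks `B` (top right) and `B*` (bottom left). -/
def Pmat {d : ℕ} (B : Matrix (Fin d) (Fin d) ℂ) (V : ℝ → Matrix (Fin d) (Fin d) ℂ)
    (ω : ℝ) (n : ℕ) (θ : ℝ) : Matrix (Fin n × Fin d) (Fin n × Fin d) ℂ := fun p q =>
  (if p.1 = q.1 then V (θ + ((n - 1 - (p.1 : ℕ) : ℕ) : ℝ) * ω) p.2 q.2 else 0)
  + (if (p.1 : ℕ) = (q.1 : ℕ) + 1 then B p.2 q.2 else 0)
  + (if (q.1 : ℕ) = (p.1 : ℕ) + 1 then Bᴴ p.2 q.2 else 0)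
  + (if (p.1 : ℕ) = 0 ∧ (q.1 : ℕ) = n - 1 then B p.2 q.2 else 0)
  + (if (q.1 : ℕ) = 0 ∧ (p.1 : ℕ) = n - 1 then Bᴴ p.2 q.2 else 0)

/-- `f_{E,n}(θ) = det(P_n(θ) − E·I_{nd})`. -/
def fdet {d : ℕ} (B : Matrix (Fin d) (Fin d) ℂ) (V : ℝ → Matrix (Fin d) (Fin d) ℂ)
    (ω : ℝ) (E : ℝ) (n : ℕ) (θ : ℝ) : ℂ :=
  (Pmat B V ω n θ - (E : ℂ) • (1 : Matrix (Fin n × Fin d) (Fin n × Fin d) ℂ)).det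

namespace Matrix

variable {ι R : Type*} [Fintype ι] [DecidableEq ι] [CommRing R] [StarRing R]

lemma IsHermitian.star_det {A : Matrix ι ι R} (hA : A.IsHermitian) : star A.det = A.det := by
  rw [← det_conjTranspose, hA.eq]

end Matrix

namespace Fin

variable {n : ℕ} {i j : Fin n}

lemma val_rev_eq_val_rev_add_one_iff : (i.rev : ℕ) = j.rev + 1 ↔ (j : ℕ) = i + 1 := by
  simp only [val_rev]
  omega

lemma val_rev_eq_zero_iff : (i.rev : ℕ) = 0 ↔ (i : ℕ) = n - 1 := by
  simp only [val_rev]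
  omega

lemma val_rev_eq_sub_one_iff : (i.rev : ℕ) = n - 1 ↔ (i : ℕ) = 0 := by
  simp only [val_rev]
  omega

end Fin

section Pmat

variable {d : ℕ} (B : Matrix (Fin d) (Fin d) ℂ) (V : ℝ → Matrix (Fin d) (Fin d) ℂ) (ω : ℝ) (n : ℕ)

lemma isHermitian_Pmat (hV : ∀ t, (V t).IsHermitian) (θ : ℝ) :
    (Pmat B V ω n θ).IsHermitian := by
  refine IsHermitian.ext fun p q => ?_
  have hdiag : star (if q.1 = p.1 then V (θ + ((n - 1 - (q.1 : ℕ) : ℕ) : ℝ) * ω) q.2 p.2 else 0)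
      = if p.1 = q.1 then V (θ + ((n - 1 - (p.1 : ℕ) : ℕ) : ℝ) * ω) p.2 q.2 else 0 := by
    by_cases h : p.1 = q.1
    · rw [if_pos h.symm, if_pos h, h, (hV _).apply]
    · rw [if_neg (Ne.symm h), if_neg h, star_zero]
  simp only [Pmat, star_add, hdiag, apply_ite star, star_zero, conjTranspose_apply, star_star]
  ring

lemma Pmat_submatrix_rev (c : ℝ) (hB : B.submatrix Fin.rev Fin.rev = Bᵀ)
    (hV : ∀ t, (V t).submatrix Fin.rev Fin.rev = (V (c - t))ᵀ) {x y : ℝ}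
    (hxy : x + y + (n - 1) * ω = c) :
    (Pmat B V ω n x).submatrix (Prod.map Fin.rev Fin.rev) (Prod.map Fin.rev Fin.rev)
      = (Pmat B V ω n y)ᵀ := by
  have hB' (m m' : Fin d) : B m.rev m'.rev = B m' m := congrFun₂ hB m m'
  have hV' (t : ℝ) (m m' : Fin d) : V t m.rev m'.rev = V (c - t) m' m := congrFun₂ (hV t) m m'
  ext ⟨j, m⟩ ⟨j', m'⟩
  have hj' := j'.isLt
  have hdiag : (if j.rev = j'.rev then V (x + ((n - 1 - (j.rev : ℕ) : ℕ) : ℝ) * ω) m.rev m'.rev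
      else 0) = if j' = j then V (y + ((n - 1 - (j' : ℕ) : ℕ) : ℝ) * ω) m' m else 0 := by
    by_cases h : j' = j
    · subst h
      rw [if_pos rfl, if_pos rfl, hV']
      have hrev : ((n - 1 - (j'.rev : ℕ) : ℕ) : ℝ) + ((n - 1 - (j' : ℕ) : ℕ) : ℝ) = n - 1 := by
        rw [Fin.val_rev, ← Nat.cast_add, show n - 1 - (n - (j' + 1)) + (n - 1 - j') = n - 1 by omega,
          Nat.cast_pred (by omega)]
      congr 2
      linear_combination -hxy - ω * hrev
    · rw [if_neg (Fin.rev_injective.ne (Ne.symm h)), if_neg h]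
  simp only [submatrix_apply, transpose_apply, Prod.map, Pmat, conjTranspose_apply, hB', hdiag, Fin.val_rev_eq_val_rev_add_one_iff, Fin.val_rev_eq_zero_iff,
    Fin.val_rev_eq_sub_one_iff, and_comm]

variable {B V ω n}

lemma star_fdet (hV : ∀ t, (V t).IsHermitian) (E θ : ℝ) :
    star (fdet B V ω E n θ) = fdet B V ω E n θ :=
  ((isHermitian_Pmat B V ω n hV θ).sub (isHermitian_one.smul (Complex.conj_ofReal E))).star_det

lemma fdet_eq_of_add_eq (c : ℝ) (hB : B.submatrix Fin.rev Fin.rev = Bᵀ)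
    (hV : ∀ t, (V t).submatrix Fin.rev Fin.rev = (V (c - t))ᵀ) (E : ℝ) {x y : ℝ}
    (hxy : x + y + (n - 1) * ω = c) :
    fdet B V ω E n x = fdet B V ω E n y := by
  let e : Fin n × Fin d ≃ Fin n × Fin d := Fin.revPerm.prodCongr Fin.revPerm
  have h : (Pmat B V ω n x - (E : ℂ) • 1).submatrix e e = (Pmat B V ω n y - (E : ℂ) • 1)ᵀ := by
    change (Pmat B V ω n x).submatrix (Prod.map Fin.rev Fin.rev) (Prod.map Fin.rev Fin.rev)
      - (E : ℂ) • (1 : Matrix (Fin n × Fin d) (Fin n × Fin d) ℂ).submatrix e e = _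
    rw [Pmat_submatrix_rev B V ω n c hB hV hxy, submatrix_one_equiv, transpose_sub,
      transpose_smul, transpose_one]
  rw [fdet, fdet, ← det_submatrix_equiv_self e, h, det_transpose]

end Pmat

section LongRange

variable {d : ℕ} (v : ℕ → ℂ)

lemma isHermitian_Vlr (g : ℝ → ℝ) (ω θ : ℝ) : (Vlr d v g ω θ).IsHermitian := by
  refine IsHermitian.ext fun j k => ?_
  rcases lt_trichotomy (j : ℕ) k with h | h | h
  · simp [Vlr, Fin.ne_of_lt h, (Fin.ne_of_lt h).symm, h, h.not_gt]
  · simp [Vlr, Fin.ext h]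
  · simp [Vlr, Fin.ne_of_lt h, (Fin.ne_of_lt h).symm, h, h.not_gt]

lemma Blr_submatrix_rev : (Blr d v).submatrix Fin.rev Fin.rev = (Blr d v)ᵀ := by
  ext j k
  simp only [submatrix_apply, transpose_apply, Blr, Fin.val_rev]
  split_ifs <;> first | rfl | omega | (congr 2; omega)

lemma Vlr_submatrix_rev {g : ℝ → ℝ} (hg : Function.Even g) (ω t : ℝ) :
    (Vlr d v g ω t).submatrix Fin.rev Fin.rev = (Vlr d v g ω (-((d - 1) * (ω / d)) - t))ᵀ := by
  ext j k
  simp only [submatrix_apply, transpose_apply, Vlr, Fin.rev_inj, Fin.val_rev]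
  split_ifs with hjk <;> try first | (exfalso; omega) | (congr 1; omega) | (congr 2; omega)
  subst hjk
  have hj := j.isLt
  rw [show d - 1 - (d - (j + 1)) = j by omega, Nat.cast_sub (by omega), Nat.cast_pred (by omega),
    ← hg]
  congr 2
  ring

end LongRange

theorem fdet_longrange_symm_general (d n : ℕ) (hd : 1 ≤ d) (ω : ℝ) (E : ℝ)
    (v : ℕ → ℂ) (g : ℝ → ℝ) (hg : ∀ x : ℝ, g (-x) = g x) (θ : ℝ) :
    fdet (Blr d v) (Vlr d v g ω) ω E n (θ - ((n * d : ℝ) - 1) / (2 * d) * ω)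
      = starRingEnd ℂ (fdet (Blr d v) (Vlr d v g ω) ω E n (-θ - ((n * d : ℝ) - 1) / (2 * d) * ω)) := by
  have hd₀ : (d : ℝ) ≠ 0 := Nat.cast_ne_zero.mpr (by omega)
  rw [starRingEnd_apply, star_fdet (isHermitian_Vlr v g ω)]
  refine fdet_eq_of_add_eq _ (Blr_submatrix_rev v) (Vlr_submatrix_rev v hg ω) E ?_
  field_simp
  ring

/-- For the long-range blocks with even `g`:
`f_{E,n}(θ − (nd−1)/(2d)·ω) = conj(f_{E,n}(−θ − (nd−1)/(2d)·ω))`. -/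
theorem fdet_longrange_symm (d n : ℕ) (hd : 1 ≤ d) (hn : 1 ≤ n) (ω : ℝ) (E : ℝ)
    (v : ℕ → ℂ) (g : ℝ → ℝ) (hg : ∀ x : ℝ, g (-x) = g x) (θ : ℝ) :
    fdet (Blr d v) (Vlr d v g ω) ω E n (θ - ((n * d : ℝ) - 1) / (2 * d) * ω)
      = starRingEnd ℂ (fdet (Blr d v) (Vlr d v g ω) ω E n (-θ - ((n * d : ℝ) - 1) / (2 * d) * ω)) :=
  fdet_longrange_symm_general d n hd ω E v g hg θ
end
end

section
/- Let d ≥ 1, n ≥ 1, ω, θ ∈ 𝕋, E ∈ ℝ. Let V : 𝕋 → Mat(d,ℂ) be Hermitian-valued and B ∈ Mat(d,ℂ) constant, and suppose there exists a unitary J ∈ Mat(d,ℂ) with J V(θ') J^{-1} = V(−θ')^T for all θ' and J B J^{-1} = B^T. Then the periodic-boundary determinant satisfies f_{E,n}(θ − (n−1)ω/2) = conj( f_{E,n}(−θ − (n−1)ω/2) ). -/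
noncomputable section

open Matrix

/-- auxiliary block description of `Pmat - E•1`. -/
def blkAux {d : ℕ} (B : Matrix (Fin d) (Fin d) ℂ) (V : ℝ → Matrix (Fin d) (Fin d) ℂ)
    (ω : ℝ) (E : ℝ) (n : ℕ) (θ : ℝ) (p q : Fin n) : Matrix (Fin d) (Fin d) ℂ :=
  (if p = q then V (θ + ((n - 1 - (p : ℕ) : ℕ) : ℝ) * ω) - (E : ℂ) • 1 else 0)
  + (if (p : ℕ) = (q : ℕ) + 1 then B else 0)
  + (if (q : ℕ) = (p : ℕ) + 1 then Bᴴ else 0)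
  + (if (p : ℕ) = 0 ∧ (q : ℕ) = n - 1 then B else 0)
  + (if (q : ℕ) = 0 ∧ (p : ℕ) = n - 1 then Bᴴ else 0)

lemma blkAux_apply {d : ℕ} (B : Matrix (Fin d) (Fin d) ℂ) (V : ℝ → Matrix (Fin d) (Fin d) ℂ)
    (ω : ℝ) (E : ℝ) (n : ℕ) (θ : ℝ) (p q : Fin n) (a b : Fin d) :
    (Pmat B V ω n θ - (E : ℂ) • (1 : Matrix (Fin n × Fin d) (Fin n × Fin d) ℂ)) (p, a) (q, b)
      = blkAux B V ω E n θ p q a b := by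
  simp only [blkAux, Pmat, Matrix.sub_apply, Matrix.smul_apply, Matrix.one_apply,
    Matrix.add_apply, Prod.mk.injEq, smul_eq_mul,
    apply_ite (fun M : Matrix (Fin d) (Fin d) ℂ => M a b), Matrix.zero_apply,
    Matrix.conjTranspose_apply]
  by_cases h : p = q <;>
    simp [h, Matrix.sub_apply, Matrix.smul_apply, Matrix.one_apply, smul_eq_mul] <;> ring

/-- the reversal-twist matrix `W`. -/
def Wmat (n : ℕ) {d : ℕ} (J : Matrix (Fin d) (Fin d) ℂ) :
    Matrix (Fin n × Fin d) (Fin n × Fin d) ℂ := fun p q =>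
  if q.1 = p.1.rev then J p.2 q.2 else 0

lemma Wmat_mul_apply {n d : ℕ} (J : Matrix (Fin d) (Fin d) ℂ)
    (M : Matrix (Fin n × Fin d) (Fin n × Fin d) ℂ) (i : Fin n) (a : Fin d) (j : Fin n) (b : Fin d) :
    (Wmat n J * M) (i, a) (j, b) = ∑ c, J a c * M (i.rev, c) (j, b) := by
  rw [Matrix.mul_apply, Fintype.sum_prod_type]
  rw [Finset.sum_eq_single i.rev]
  · simp [Wmat]
  · intro k _ hk
    simp [Wmat, hk]
  · simp

lemma mul_Wmat_apply {n d : ℕ} (J : Matrix (Fin d) (Fin d) ℂ)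
    (M : Matrix (Fin n × Fin d) (Fin n × Fin d) ℂ) (i : Fin n) (a : Fin d) (j : Fin n) (b : Fin d) :
    (M * Wmat n J) (i, a) (j, b) = ∑ c, M (i, a) (j.rev, c) * J c b := by
  rw [Matrix.mul_apply, Fintype.sum_prod_type]
  rw [Finset.sum_eq_single j.rev]
  · simp [Wmat]
  · intro k _ hk
    have : j ≠ k.rev := fun h => hk (by rw [h, Fin.rev_rev])
    simp [Wmat, this]
  · simp

/-- If a unitary `J` conjugates `V(θ)` to `V(−θ)ᵀ` and `B` to `Bᵀ`, then
`f_{E,n}(θ − (n−1)ω/2) = conj(f_{E,n}(−θ − (n−1)ω/2))`. -/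
theorem fdet_symm_of_conj (d n : ℕ) (hd : 1 ≤ d) (hn : 1 ≤ n) (ω θ : ℝ) (E : ℝ)
    (V : ℝ → Matrix (Fin d) (Fin d) ℂ) (hV : ∀ θ' : ℝ, (V θ').IsHermitian)
    (B J : Matrix (Fin d) (Fin d) ℂ)
    (hJ : J ∈ Matrix.unitaryGroup (Fin d) ℂ)
    (hJV : ∀ θ' : ℝ, J * V θ' * J⁻¹ = (V (-θ'))ᵀ)
    (hJB : J * B * J⁻¹ = Bᵀ) :
    fdet B V ω E n (θ - (n - 1 : ℝ) * ω / 2)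
      = starRingEnd ℂ (fdet B V ω E n (-θ - (n - 1 : ℝ) * ω / 2)) := by
  classical
  set θ₁ : ℝ := θ - (n - 1 : ℝ) * ω / 2 with hθ₁
  set θ₂ : ℝ := -θ - (n - 1 : ℝ) * ω / 2 with hθ₂
  set M₁ := Pmat B V ω n θ₁ - (E : ℂ) • (1 : Matrix (Fin n × Fin d) (Fin n × Fin d) ℂ) with hM₁
  set M₂ := Pmat B V ω n θ₂ - (E : ℂ) • (1 : Matrix (Fin n × Fin d) (Fin n × Fin d) ℂ) with hM₂
  have hJ1 : Jᴴ * J = 1 := (Unitary.mem_iff.mp hJ).1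
  have hJ2 : J * Jᴴ = 1 := (Unitary.mem_iff.mp hJ).2
  have hJinv : J⁻¹ = Jᴴ := Matrix.inv_eq_left_inv hJ1
  have keyV : ∀ α : ℝ, J * V α = (V (-α))ᵀ * J := by
    intro α
    have h := hJV α
    rw [hJinv] at h
    calc J * V α = (J * V α * Jᴴ) * J := by
          rw [mul_assoc (J * V α) Jᴴ J, hJ1, mul_one]
      _ = (V (-α))ᵀ * J := by rw [h]
  have keyB : J * B = Bᵀ * J := by
    have h := hJB
    rw [hJinv] at h
    calc J * B = (J * B * Jᴴ) * J := by
          rw [mul_assoc (J * B) Jᴴ J, hJ1, mul_one]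
      _ = Bᵀ * J := by rw [h]
  have keyBH : J * Bᴴ = (Bᴴ)ᵀ * J := by
    have h := congrArg Matrix.conjTranspose keyB
    rw [Matrix.conjTranspose_mul, Matrix.conjTranspose_mul] at h
    -- h : Bᴴ * Jᴴ = Jᴴ * (Bᵀ)ᴴ
    have h2 : J * (Bᴴ * Jᴴ) * J = J * (Jᴴ * (Bᵀ)ᴴ) * J := by rw [h]
    rw [← mul_assoc, ← mul_assoc, mul_assoc (J * Bᴴ) Jᴴ J, hJ1, mul_one, hJ2, one_mul] at h2
    rw [h2]
    rfl
  have keyE : J * ((E : ℂ) • (1 : Matrix (Fin d) (Fin d) ℂ))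
      = ((E : ℂ) • (1 : Matrix (Fin d) (Fin d) ℂ))ᵀ * J := by
    simp [Matrix.mul_smul, Matrix.smul_mul]
  have hblk : ∀ i j : Fin n,
      J * blkAux B V ω E n θ₁ i.rev j = (blkAux B V ω E n θ₂ j.rev i)ᵀ * J := by
    intro i j
    have hi := i.isLt; have hj := j.isLt
    have hri : (i.rev : ℕ) = n - 1 - (i : ℕ) := by rw [Fin.val_rev]; omega
    have hrj : (j.rev : ℕ) = n - 1 - (j : ℕ) := by rw [Fin.val_rev]; omega
    simp only [blkAux, Matrix.transpose_add, mul_add, Matrix.add_mul,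
      apply_ite (Matrix.transpose), Matrix.transpose_zero]
    congr 1
    congr 1
    congr 1
    congr 1
    -- diagonal term
    · by_cases h : i.rev = j
      · have h' : j.rev = i := by
          rw [Fin.ext_iff] at h ⊢; omega
        rw [if_pos h, if_pos h']
        have e1 : (n - 1 - (i.rev : ℕ)) = (i : ℕ) := by omega
        have e2 : (n - 1 - (j.rev : ℕ)) = n - 1 - (i : ℕ) := by
          rw [Fin.ext_iff] at h'; omega
        have hb : θ₂ + ((n - 1 - (j.rev : ℕ) : ℕ) : ℝ) * ω
            = -(θ₁ + ((n - 1 - (i.rev : ℕ) : ℕ) : ℝ) * ω) := by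
          rw [e1, e2, hθ₁, hθ₂]
          rw [Nat.cast_sub (by omega), Nat.cast_sub (by omega : 1 ≤ n)]
          push_cast
          ring
        rw [hb, Matrix.transpose_sub, mul_sub, Matrix.sub_mul, keyV, keyE]
      · have h' : ¬ (j.rev = i) := by
          rw [Fin.ext_iff] at h ⊢; omega
        rw [if_neg h, if_neg h']
        simp
    -- subdiagonal term
    · by_cases h : (i.rev : ℕ) = (j : ℕ) + 1
      · have h' : (j.rev : ℕ) = (i : ℕ) + 1 := by omega
        rw [if_pos h, if_pos h', keyB]
      · have h' : ¬ ((j.rev : ℕ) = (i : ℕ) + 1) := by omega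
        rw [if_neg h, if_neg h']
        simp
    -- superdiagonal term
    · by_cases h : (j : ℕ) = (i.rev : ℕ) + 1
      · have h' : (i : ℕ) = (j.rev : ℕ) + 1 := by omega
        rw [if_pos h, if_pos h', keyBH]
      · have h' : ¬ ((i : ℕ) = (j.rev : ℕ) + 1) := by omega
        rw [if_neg h, if_neg h']
        simp
    -- top-right corner
    · by_cases h : (i.rev : ℕ) = 0 ∧ (j : ℕ) = n - 1
      · have h' : (j.rev : ℕ) = 0 ∧ (i : ℕ) = n - 1 := by omega
        rw [if_pos h, if_pos h', keyB]
      · have h' : ¬ ((j.rev : ℕ) = 0 ∧ (i : ℕ) = n - 1) := by omega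
        rw [if_neg h, if_neg h']
        simp
    -- bottom-left corner
    · by_cases h : (j : ℕ) = 0 ∧ (i.rev : ℕ) = n - 1
      · have h' : (i : ℕ) = 0 ∧ (j.rev : ℕ) = n - 1 := by omega
        rw [if_pos h, if_pos h', keyBH]
      · have h' : ¬ ((i : ℕ) = 0 ∧ (j.rev : ℕ) = n - 1) := by omega
        rw [if_neg h, if_neg h']
        simp
  have hcomm : Wmat n J * M₁ = M₂ᵀ * Wmat n J := by
    ext ⟨i, a⟩ ⟨j, b⟩
    rw [Wmat_mul_apply, mul_Wmat_apply]
    have hL : ∑ c, J a c * M₁ (i.rev, c) (j, b)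
        = (J * blkAux B V ω E n θ₁ i.rev j) a b := by
      rw [Matrix.mul_apply]
      exact Finset.sum_congr rfl fun c _ => by rw [hM₁, blkAux_apply]
    have hR : ∑ c, M₂ᵀ (i, a) (j.rev, c) * J c b
        = ((blkAux B V ω E n θ₂ j.rev i)ᵀ * J) a b := by
      rw [Matrix.mul_apply]
      refine Finset.sum_congr rfl fun c _ => ?_
      rw [Matrix.transpose_apply, Matrix.transpose_apply, hM₂, blkAux_apply]
    rw [hL, hR, hblk]
  have hW : Wmat n J * (Wmat n J)ᴴ = 1 := by
    ext ⟨i, a⟩ ⟨j, b⟩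
    rw [Wmat_mul_apply]
    by_cases h : i = j
    · subst h
      have h2 : (J * Jᴴ) a b = (1 : Matrix (Fin d) (Fin d) ℂ) a b := by rw [hJ2]
      rw [Matrix.mul_apply] at h2
      simpa [Wmat, Matrix.conjTranspose_apply, Matrix.one_apply, Prod.ext_iff] using h2
    · have : i.rev ≠ j.rev := fun hh => h (Fin.rev_inj.mp hh)
      simp [Wmat, Matrix.conjTranspose_apply, Matrix.one_apply, Prod.ext_iff, this, h]
  have hdW : (Wmat n J).det ≠ 0 := by
    have : IsUnit (Wmat n J).det := Matrix.isUnit_det_of_right_inverse hW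
    exact this.ne_zero
  have hdet12 : M₁.det = M₂.det := by
    apply mul_left_cancel₀ hdW
    calc (Wmat n J).det * M₁.det = (Wmat n J * M₁).det := (Matrix.det_mul _ _).symm
      _ = (M₂ᵀ * Wmat n J).det := by rw [hcomm]
      _ = M₂ᵀ.det * (Wmat n J).det := Matrix.det_mul _ _
      _ = (Wmat n J).det * M₂.det := by rw [Matrix.det_transpose, mul_comm]
  have hherm : M₂ᴴ = M₂ := by
    ext ⟨p1, p2⟩ ⟨q1, q2⟩
    rw [Matrix.conjTranspose_apply, hM₂, blkAux_apply, blkAux_apply]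
    simp only [blkAux, Matrix.add_apply, Matrix.sub_apply, Matrix.smul_apply, smul_eq_mul,
      apply_ite (fun M : Matrix (Fin d) (Fin d) ℂ => M q2 p2),
      apply_ite (fun M : Matrix (Fin d) (Fin d) ℂ => M p2 q2),
      Matrix.zero_apply, Matrix.one_apply, Matrix.conjTranspose_apply,
      star_add, star_sub, star_zero, RCLike.star_def,
      apply_ite (starRingEnd ℂ), map_zero, Complex.conj_conj, Complex.conj_ofReal]
    have hVe : ∀ α, (starRingEnd ℂ) (V α q2 p2) = V α p2 q2 := fun α => (hV α).apply p2 q2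
    by_cases h : p1 = q1
    · subst h
      by_cases hab : p2 = q2
      · subst hab
        simp [hVe]
        ring
      · have hab' : ¬ q2 = p2 := fun hh => hab hh.symm
        simp [hab, hab', hVe]
        ring
    · have h' : ¬ q1 = p1 := fun hh => h hh.symm
      simp [h, h', hVe]
      ring
  show M₁.det = starRingEnd ℂ M₂.det
  rw [starRingEnd_apply, ← Matrix.det_conjTranspose, hherm]
  exact hdet12
end
end

section
/- Let ρ ∈ ℝ, B = [[1, ρ],[−ρ, −1]], and V(θ) = diag(v(θ), −v(θ)) where v : 𝕋 → ℝ satisfies v(θ + 1/2) = −v(θ) for all θ. Then for every even n ≥ 2, every ω, θ ∈ 𝕋, and every E ∈ ℝ, the periodic-boundary determinant of the 2×2 block Jacobi operator satisfies f_{E,n}(θ + 1/2) = f_{E,n}(θ). -/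
/-!
Let `J` swap the two components and `S = diag((-1)^j) ⊗ J`, so that `S² = 1`. Antisymmetry of `v`
under `θ ↦ θ + 1/2` gives `J V(θ) J = V(θ + 1/2)`, while `J B J = -B`; the staggered sign flips
every hopping block, the periodic corner blocks included because `n` is even. Hence
`P_n(θ + 1/2) = S P_n(θ) S`, and the two determinants agree.
-/

noncomputable section

open Matrix

/-- XY hopping block `B = [[1, ρ],[−ρ, −1]]`. -/
def Bxy (ρ : ℝ) : Matrix (Fin 2) (Fin 2) ℂ :=
  !![(1 : ℂ), (ρ : ℂ); (-ρ : ℂ), (-1 : ℂ)]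

/-- XY potential block `V(θ) = diag(v(θ), −v(θ))`. -/
def Vxy (v : ℝ → ℝ) (θ : ℝ) : Matrix (Fin 2) (Fin 2) ℂ :=
  !![(v θ : ℂ), 0; 0, (-(v θ) : ℂ)]

section Involutive

variable {ι R : Type*} [Fintype ι] [DecidableEq ι] [CommRing R] {s : ι → R}

theorem diagonal_mul_diagonal_self (hs : ∀ i, s i * s i = 1) : diagonal s * diagonal s = 1 := by
  rw [diagonal_mul_diagonal, ← diagonal_one]
  exact congrArg diagonal (funext hs)

theorem det_diagonal_mul_mul_diagonal (hs : ∀ i, s i * s i = 1) (M : Matrix ι ι R) :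
    (diagonal s * M * diagonal s).det = M.det := by
  rw [det_mul, det_mul, mul_right_comm, ← det_mul, diagonal_mul_diagonal_self hs, det_one, one_mul]

theorem diagonal_mul_smul_one_mul_diagonal (hs : ∀ i, s i * s i = 1) (r : R) :
    diagonal s * (r • 1 : Matrix ι ι R) * diagonal s = r • 1 := by
  rw [mul_smul_comm, mul_one, smul_mul_assoc, diagonal_mul_diagonal_self hs]

end Involutive

theorem conjTranspose_apply_eq_neg {d : ℕ} {B : Matrix (Fin d) (Fin d) ℂ} {τ : Equiv.Perm (Fin d)}
    (hB : ∀ a b, B a b = -B (τ a) (τ b)) (a b : Fin d) :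
    Bᴴ a b = -Bᴴ (τ a) (τ b) := by
  simp only [conjTranspose_apply, hB b a, star_neg]

section Staggered

variable {d : ℕ} {B : Matrix (Fin d) (Fin d) ℂ} {V : ℝ → Matrix (Fin d) (Fin d) ℂ}
  {τ : Equiv.Perm (Fin d)} {c : ℝ} {n : ℕ}

theorem Pmat_add_apply (hV : ∀ x a b, V (x + c) a b = V x (τ a) (τ b))
    (hB : ∀ a b, B a b = -B (τ a) (τ b)) (hn : Even n) (ω θ : ℝ) (j k : Fin n) (a b : Fin d) :
    Pmat B V ω n (θ + c) (j, a) (k, b) =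
      (-1 : ℂ) ^ ((j : ℕ) + k) * Pmat B V ω n θ (j, τ a) (k, τ b) := by
  have hodd : Odd ((j : ℕ) + k) → (-1 : ℂ) ^ ((j : ℕ) + k) = -1 := Odd.neg_one_pow
  have hcorner : (j : ℕ) + k + 1 = n → Odd ((j : ℕ) + k) := fun h =>
    Nat.not_even_iff_odd.mp (Nat.even_add_one.mp (h.symm ▸ hn))
  -- Every nonzero off-diagonal block joins sites of opposite parity; for the periodic corner
  -- blocks, joining sites `0` and `n - 1`, this is where the evenness of `n` enters.
  simp only [Pmat, mul_add]
  congr 1; congr 1; congr 1; congr 1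
  · split_ifs with h
    · subst h
      rw [Even.neg_one_pow ⟨_, rfl⟩, one_mul, add_right_comm, hV]
    · rw [mul_zero]
  · split_ifs with h
    · rw [hodd ⟨k, by omega⟩, neg_one_mul, hB]
    · rw [mul_zero]
  · split_ifs with h
    · rw [hodd ⟨j, by omega⟩, neg_one_mul, conjTranspose_apply_eq_neg hB]
    · rw [mul_zero]
  · split_ifs with h
    · rw [hodd (hcorner (by omega)), neg_one_mul, hB]
    · rw [mul_zero]
  · split_ifs with h
    · rw [hodd (hcorner (by omega)), neg_one_mul, conjTranspose_apply_eq_neg hB]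
    · rw [mul_zero]

theorem Pmat_add_eq_conj (hV : ∀ x a b, V (x + c) a b = V x (τ a) (τ b))
    (hB : ∀ a b, B a b = -B (τ a) (τ b)) (hn : Even n) (ω θ : ℝ) :
    Pmat B V ω n (θ + c) =
      diagonal (fun p : Fin n × Fin d => (-1 : ℂ) ^ (p.1 : ℕ)) *
        (Pmat B V ω n θ).submatrix (Equiv.prodCongr (Equiv.refl _) τ)
          (Equiv.prodCongr (Equiv.refl _) τ) *
        diagonal (fun p : Fin n × Fin d => (-1 : ℂ) ^ (p.1 : ℕ)) := by
  ext ⟨j, a⟩ ⟨k, b⟩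
  rw [mul_diagonal, diagonal_mul, submatrix_apply, Pmat_add_apply hV hB hn, pow_add]
  simp only [Equiv.prodCongr_apply, Equiv.coe_refl, Prod.map_apply, id_eq]
  ring

theorem fdet_add_eq (hV : ∀ x a b, V (x + c) a b = V x (τ a) (τ b))
    (hB : ∀ a b, B a b = -B (τ a) (τ b)) (hn : Even n) (ω E θ : ℝ) :
    fdet B V ω E n (θ + c) = fdet B V ω E n θ := by
  set e : Fin n × Fin d ≃ Fin n × Fin d := Equiv.prodCongr (Equiv.refl _) τ
  have hs : ∀ p : Fin n × Fin d, (-1 : ℂ) ^ (p.1 : ℕ) * (-1) ^ (p.1 : ℕ) = 1 := fun p => by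
    rw [← pow_add, Even.neg_one_pow ⟨_, rfl⟩]
  have hconj : Pmat B V ω n (θ + c) - (E : ℂ) • 1 =
      diagonal (fun p => (-1 : ℂ) ^ (p.1 : ℕ)) * (Pmat B V ω n θ - (E : ℂ) • 1).submatrix e e *
        diagonal (fun p => (-1 : ℂ) ^ (p.1 : ℕ)) := by
    have hsub : (Pmat B V ω n θ - (E : ℂ) • 1).submatrix e e =
        (Pmat B V ω n θ).submatrix e e - (E : ℂ) • 1 := by
      conv_rhs => rw [← submatrix_one_equiv e]
      rfl
    rw [Pmat_add_eq_conj hV hB hn, hsub, mul_sub, sub_mul, diagonal_mul_smul_one_mul_diagonal hs]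
  rw [fdet, fdet, hconj, det_diagonal_mul_mul_diagonal hs, det_submatrix_equiv_self]

end Staggered

theorem Vxy_add_apply {v : ℝ → ℝ} {c : ℝ} (hv : ∀ x, v (x + c) = -v x) (x : ℝ) (a b : Fin 2) :
    Vxy v (x + c) a b = Vxy v x (Equiv.swap 0 1 a) (Equiv.swap 0 1 b) := by
  fin_cases a <;> fin_cases b <;> simp [Vxy, hv]

theorem Bxy_apply_eq_neg_swap (ρ : ℝ) (a b : Fin 2) :
    Bxy ρ a b = -Bxy ρ (Equiv.swap 0 1 a) (Equiv.swap 0 1 b) := by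
  fin_cases a <;> fin_cases b <;> simp [Bxy]

theorem fdet_xy_half_periodic_general (ρ : ℝ) (v : ℝ → ℝ) (hv : ∀ θ : ℝ, v (θ + 1 / 2) = -v θ)
    (n : ℕ) (heven : Even n) (ω θ : ℝ) (E : ℝ) :
    fdet (Bxy ρ) (Vxy v) ω E n (θ + 1 / 2) = fdet (Bxy ρ) (Vxy v) ω E n θ :=
  fdet_add_eq (Vxy_add_apply hv) (Bxy_apply_eq_neg_swap ρ) heven ω E θ

/-- For the XY blocks with `v(θ+1/2) = −v(θ)` and even `n`, `f_{E,n}(θ+1/2) = f_{E,n}(θ)`. -/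
theorem fdet_xy_half_periodic (ρ : ℝ) (v : ℝ → ℝ) (hv : ∀ θ : ℝ, v (θ + 1 / 2) = -v θ)
    (n : ℕ) (hn : 2 ≤ n) (heven : Even n) (ω θ : ℝ) (E : ℝ) :
    fdet (Bxy ρ) (Vxy v) ω E n (θ + 1 / 2) = fdet (Bxy ρ) (Vxy v) ω E n θ :=
  fdet_xy_half_periodic_general ρ v hv n heven ω θ E
end
end

section
/- Let q ≥ 3, let B ∈ Mat(q,ℂ) be any diagonal matrix, and let V(θ) ∈ Mat(q,ℂ) have entries (V(θ))_{jk} = e^{2πiθ} if k ≡ j+1 (mod q), (V(θ))_{jk} = e^{−2πiθ} if k ≡ j−1 (mod q), and 0 otherwise. Then for every n ≥ 1, ω, θ ∈ 𝕋, and E ∈ ℝ, the periodic-boundary determinant of the block Jacobi operator with blocks B, V and frequency ω satisfies f_{E,n}(θ + 1/q) = f_{E,n}(θ). -/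
noncomputable section

open Matrix

/-- The circulant-type potential block `V(θ)`: `e^{2πiθ}` on the (cyclic) superdiagonal and
`e^{−2πiθ}` on the (cyclic) subdiagonal. -/
def Vsk (q : ℕ) (θ : ℝ) : Matrix (Fin q) (Fin q) ℂ := fun j k =>
  if ((k : ℕ) : ZMod q) = ((j : ℕ) : ZMod q) + 1 then Complex.exp (2 * Real.pi * Complex.I * θ)
  else if ((k : ℕ) : ZMod q) = ((j : ℕ) : ZMod q) - 1 then
    Complex.exp (-(2 * Real.pi * Complex.I * θ))
  else 0

lemma exp_period (z : ℂ) (m : ℤ) :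
    Complex.exp (z + m * (2 * Real.pi * Complex.I)) = Complex.exp z := by
  rw [Complex.exp_add, Complex.exp_int_mul_two_pi_mul_I, mul_one]

lemma exp_shift (q : ℕ) (hq : 0 < q) (a b : ℕ) (c : ℤ) (h : (q:ℤ) ∣ (b:ℤ) - a - c) (z : ℂ) :
    Complex.exp (2 * Real.pi * Complex.I * (a:ℂ) / q) *
      Complex.exp (2 * Real.pi * Complex.I * (z + c / q))
      = Complex.exp (2 * Real.pi * Complex.I * z) *
        Complex.exp (2 * Real.pi * Complex.I * (b:ℂ) / q) := by
  obtain ⟨m, hm⟩ := h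
  have hb : ((b:ℂ)) = (a:ℂ) + (c:ℂ) + (q:ℂ) * m := by
    have : (b:ℤ) = a + c + q * m := by linarith
    exact_mod_cast congrArg (Int.cast : ℤ → ℂ) this
  have hq0 : (q:ℂ) ≠ 0 := by exact_mod_cast hq.ne'
  rw [← Complex.exp_add, ← Complex.exp_add, hb]
  rw [show 2 * Real.pi * Complex.I * z + 2 * Real.pi * Complex.I * ((a:ℂ) + c + q * m) / q
      = (2 * Real.pi * Complex.I * a / q + 2 * Real.pi * Complex.I * (z + c / q))
        + m * (2 * Real.pi * Complex.I) by field_simp; ring]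
  rw [exp_period]

lemma vsk_conj (q : ℕ) (hq : 0 < q) (θ : ℝ) (j k : Fin q) :
    Complex.exp (2 * Real.pi * Complex.I * ((j:ℕ):ℂ) / q) * Vsk q (θ + 1 / q) j k
      = Vsk q θ j k * Complex.exp (2 * Real.pi * Complex.I * ((k:ℕ):ℂ) / q) := by
  have hq0 : (q:ℂ) ≠ 0 := by exact_mod_cast hq.ne'
  unfold Vsk
  by_cases h1 : ((k:ℕ) : ZMod q) = ((j:ℕ) : ZMod q) + 1
  · have hdvd : (q:ℤ) ∣ (k:ℤ) - (j:ℤ) - 1 := by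
      have : (((k:ℤ) - (j:ℤ) - 1 : ℤ) : ZMod q) = 0 := by
        push_cast; rw [h1]; ring
      exact (ZMod.intCast_zmod_eq_zero_iff_dvd _ q).mp this
    rw [if_pos h1, if_pos h1]
    have := exp_shift q hq j k 1 (by push_cast; exact hdvd) (θ:ℂ)
    rw [show ((θ + 1 / q : ℝ) : ℂ) = (θ:ℂ) + ((1:ℤ):ℂ) / q by push_cast; ring]
    exact this
  · rw [if_neg h1, if_neg h1]
    by_cases h2 : ((k:ℕ) : ZMod q) = ((j:ℕ) : ZMod q) - 1
    · have hdvd : (q:ℤ) ∣ (k:ℤ) - (j:ℤ) - (-1) := by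
        have : (((k:ℤ) - (j:ℤ) + 1 : ℤ) : ZMod q) = 0 := by
          push_cast; rw [h2]; ring
        rw [sub_neg_eq_add]
        exact (ZMod.intCast_zmod_eq_zero_iff_dvd _ q).mp this
      rw [if_pos h2, if_pos h2]
      have := exp_shift q hq j k (-1) (by push_cast at hdvd ⊢; exact hdvd) (-(θ:ℂ))
      rw [show -(2 * Real.pi * Complex.I * ((θ + 1 / q : ℝ):ℂ))
          = 2 * Real.pi * Complex.I * (-(θ:ℂ) + ((-1:ℤ):ℂ) / q) by push_cast; ring]
      rw [show -(2 * Real.pi * Complex.I * (θ:ℂ)) = 2 * Real.pi * Complex.I * (-(θ:ℂ)) by ring]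
      exact this
    · rw [if_neg h2, if_neg h2, mul_zero, zero_mul]

/-- For the dual skew-shift blocks with any diagonal `B`, `f_{E,n}(θ + 1/q) = f_{E,n}(θ)`. -/
theorem fdet_skew_periodic (q : ℕ) (hq : 3 ≤ q) (B : Matrix (Fin q) (Fin q) ℂ)
    (hB : B.IsDiag) (n : ℕ) (hn : 1 ≤ n) (ω θ : ℝ) (E : ℝ) :
    fdet B (Vsk q) ω E n (θ + 1 / q) = fdet B (Vsk q) ω E n θ := by
  have hq0 : 0 < q := by omega
  set u : Fin n × Fin q → ℂ := fun p => Complex.exp (2 * Real.pi * Complex.I * ((p.2:ℕ):ℂ) / q)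
    with hu
  set D : Matrix (Fin n × Fin q) (Fin n × Fin q) ℂ := Matrix.diagonal u with hD
  -- commuting with scalar-diagonal factor u: any diagonal matrix M satisfies u p * M p.2 r.2 = M p.2 r.2 * u r
  have hdiagcomm : ∀ (M : Matrix (Fin q) (Fin q) ℂ), M.IsDiag →
      ∀ (p r : Fin n × Fin q), u p * M p.2 r.2 = M p.2 r.2 * u r := by
    intro M hM p r
    by_cases h : p.2 = r.2
    · have hur : u p = u r := by rw [hu]; simp [h]
      rw [hur, mul_comm]
    · rw [hM h, mul_zero, zero_mul]
  have hBH : (Bᴴ).IsDiag := hB.conjTranspose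
  have key : D * (Pmat B (Vsk q) ω n (θ + 1 / q) - (E:ℂ) • 1)
      = (Pmat B (Vsk q) ω n θ - (E:ℂ) • 1) * D := by
    ext p r
    rw [hD, Matrix.diagonal_mul, Matrix.mul_diagonal]
    simp only [Matrix.sub_apply, Matrix.smul_apply, Matrix.one_apply, Pmat]
    rw [mul_sub, sub_mul]
    congr 1
    · rw [mul_add, mul_add, mul_add, mul_add, add_mul, add_mul, add_mul, add_mul]
      congr 1
      congr 1
      congr 1
      congr 1
      · by_cases h : p.1 = r.1
        · rw [if_pos h, if_pos h]
          rw [show θ + 1 / q + ((n - 1 - (p.1 : ℕ) : ℕ) : ℝ) * ω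
              = (θ + ((n - 1 - (p.1 : ℕ) : ℕ) : ℝ) * ω) + 1 / q by push_cast; ring]
          exact vsk_conj q hq0 _ p.2 r.2
        · rw [if_neg h, if_neg h, mul_zero, zero_mul]
      · split_ifs with h
        · exact hdiagcomm B hB p r
        · rw [mul_zero, zero_mul]
      · split_ifs with h
        · exact hdiagcomm _ hBH p r
        · rw [mul_zero, zero_mul]
      · split_ifs with h
        · exact hdiagcomm B hB p r
        · rw [mul_zero, zero_mul]
      · split_ifs with h
        · exact hdiagcomm _ hBH p r
        · rw [mul_zero, zero_mul]
    · split_ifs with h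
      · rw [h, mul_comm]
      · rw [smul_zero, mul_zero, zero_mul]
  have hdet : D.det ≠ 0 := by
    rw [hD, Matrix.det_diagonal]
    exact Finset.prod_ne_zero_iff.mpr fun p _ => Complex.exp_ne_zero _
  have := congrArg Matrix.det key
  rw [Matrix.det_mul, Matrix.det_mul, mul_comm] at this
  exact mul_right_cancel₀ hdet this
end
end
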